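/- Let G be a finite simple graph, c ∈ ℝ, and define the synchronous myopic best-response update F on configurations by F(σ)(i) = A if d_{i,A}(σ) − d_{i,B}(σ) ≥ c and F(σ)(i) = B otherwise. Suppose S is a subset of vertices such that every i ∈ S satisfies k_i(S) > −c, where k_i(S) is the number of neighbors of i inside S minus the number of neighbors of i outside S, and suppose σ₀ assigns identity B to every vertex of S. Then for every t ≥ 0, the t-fold iterate F^[t](σ₀) assigns identity B to every vertex of S; in particular, identity A never diffuses to the whole network. (Proposition 6, second part: a sufficiently cohesive group blocks full diffusion.) -/
import Mathlib


/-- Two possible social identities. -/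
inductive Identity : Type
  | A
  | B
deriving DecidableEq

/-- `dId G σ I i` = number of neighbors of `i` whose identity under `σ` is `I`. -/
def dId {V : Type*} [Fintype V] [DecidableEq V]
    (G : SimpleGraph V) [DecidableRel G.Adj]
    (σ : V → Identity) (I : Identity) (i : V) : ℕ :=
  ((G.neighborFinset i).filter (fun j => σ j = I)).card

/-- `σ` is an identity equilibrium w.r.t. `c`: every vertex has identity `A`
whenever `d_{i,A}(σ) − d_{i,B}(σ) ≥ c`, and identity `B` whenever
`d_{i,A}(σ) − d_{i,B}(σ) < c`. -/
def IsIdentityEquilibrium {V : Type*} [Fintype V] [DecidableEq V]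
    (G : SimpleGraph V) [DecidableRel G.Adj] (c : ℝ) (σ : V → Identity) : Prop :=
  ∀ i : V,
    (((dId G σ Identity.A i : ℝ) - (dId G σ Identity.B i : ℝ) ≥ c →
        σ i = Identity.A) ∧
     ((dId G σ Identity.A i : ℝ) - (dId G σ Identity.B i : ℝ) < c →
        σ i = Identity.B))

/-- Synchronous myopic best-response update: a vertex adopts identity `A`
exactly when `d_{i,A}(σ) − d_{i,B}(σ) ≥ c`, and `B` otherwise. -/
noncomputable def bestResponseUpdate {V : Type*} [Fintype V] [DecidableEq V]
    (G : SimpleGraph V) [DecidableRel G.Adj] (c : ℝ)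
    (σ : V → Identity) : V → Identity :=
  fun i =>
    if (dId G σ Identity.A i : ℝ) - (dId G σ Identity.B i : ℝ) ≥ c then
      Identity.A
    else Identity.B

lemma brStep_aux {V : Type*} [Fintype V] [DecidableEq V]
    (G : SimpleGraph V) [DecidableRel G.Adj]
    (c : ℝ) (S : Finset V)
    (hin : ∀ i ∈ S,
      ((G.neighborFinset i ∩ S).card : ℝ) - ((G.neighborFinset i \ S).card : ℝ)
        > -c)
    (σ : V → Identity) (h : ∀ i ∈ S, σ i = Identity.B) :
    ∀ i ∈ S, bestResponseUpdate G c σ i = Identity.B := by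
  intro i hi
  have hA : (dId G σ Identity.A i) ≤ (G.neighborFinset i \ S).card := by
    apply Finset.card_le_card
    intro j hj
    simp only [dId, Finset.mem_filter, Finset.mem_sdiff] at hj ⊢
    refine ⟨hj.1, fun hjS => ?_⟩
    have := h j hjS
    rw [this] at hj
    exact absurd hj.2 (by simp)
  have hB : (G.neighborFinset i ∩ S).card ≤ dId G σ Identity.B i := by
    apply Finset.card_le_card
    intro j hj
    simp only [dId, Finset.mem_filter, Finset.mem_inter] at hj ⊢
    exact ⟨hj.1, h j hj.2⟩
  have := hin i hi
  have hlt : (dId G σ Identity.A i : ℝ) - (dId G σ Identity.B i : ℝ) < c := by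
    have h1 : (dId G σ Identity.A i : ℝ) ≤ ((G.neighborFinset i \ S).card : ℝ) :=
      Nat.cast_le.mpr hA
    have h2 : ((G.neighborFinset i ∩ S).card : ℝ) ≤ (dId G σ Identity.B i : ℝ) :=
      Nat.cast_le.mpr hB
    linarith
  simp [bestResponseUpdate, not_le.mpr hlt]

/-- Proposition 6, second part: If every `i ∈ S` has
`k_i(S) > −c` (links inside `S` minus links outside `S`) and `σ₀` assigns
`B` to all of `S`, then every iterate of the synchronous myopic
best-response update still assigns `B` to all of `S`; in particular (for
`S` nonempty) identity `A` never diffuses to the whole network. -/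
theorem cohesive_group_blocks_diffusion
    {V : Type*} [Fintype V] [DecidableEq V]
    (G : SimpleGraph V) [DecidableRel G.Adj]
    (c : ℝ) (S : Finset V)
    (hin : ∀ i ∈ S,
      ((G.neighborFinset i ∩ S).card : ℝ) - ((G.neighborFinset i \ S).card : ℝ)
        > -c)
    (σ₀ : V → Identity) (h₀ : ∀ i ∈ S, σ₀ i = Identity.B) :
    (∀ t : ℕ, ∀ i ∈ S, (bestResponseUpdate G c)^[t] σ₀ i = Identity.B) ∧
    (S.Nonempty →
      ∀ t : ℕ, ¬ ∀ i : V, (bestResponseUpdate G c)^[t] σ₀ i = Identity.A) := by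
  have key : ∀ t : ℕ, ∀ i ∈ S, (bestResponseUpdate G c)^[t] σ₀ i = Identity.B := by
    intro t
    induction t with
    | zero => simpa using h₀
    | succ n ih =>
      intro i hi
      rw [Function.iterate_succ_apply']
      exact brStep_aux G c S hin _ ih i hi
  refine ⟨key, fun ⟨i, hi⟩ t hall => ?_⟩
  have h1 := key t i hi
  have h2 := hall i
  rw [h1] at h2
  exact Identity.noConfusion h2
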